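/- arXiv:2307.04227 — 2 statements merged into one kernel-verified Lean document; each statement's English description precedes it below -/
import Mathlib

section
/- Let U ⊂ ℝ^ℓ be compact with Leb(U) > 0, y^∞ ∈ ℝ^d, and set A = max_{u∈U}{f(u)+p(u)·y^∞} with f, p continuous. Suppose S ⊂ U is closed with ε := A - sup_{u∈S}{f(u)+p(u)·y^∞} > 0 and L := Leb({u ∈ U : f(u)+p(u)·y^∞ ≥ A - ε/2}) > 0. Then for the Gibbs densities, limsup_{λ↓0} ∫_S Γ_λ(y^∞)(u) du = 0; in fact ∫_S Γ_λ(y^∞)(u) du ≤ (Leb(S)/L) e^{-ε/(2λ)}. -/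
open MeasureTheory Real Filter

/-!
On `S` the integrand `exp (g / λ)` is at most `exp ((A - ε) / λ)`, while on the superlevel set
`{g ≥ A - ε/2}` of positive measure `L` it is at least `exp ((A - ε/2) / λ)`, so the partition
function `∫_U exp (g / λ)` is at least `L exp ((A - ε/2) / λ)`. The ratio of the two bounds is
`(Leb S / L) exp (-ε / (2λ))`, which tends to `0` as `λ ↓ 0`.
-/

theorem tendsto_exp_div_nhdsGT_zero_of_neg {a : ℝ} (ha : a < 0) :
    Tendsto (fun x : ℝ => exp (a / x)) (nhdsWithin 0 (Set.Ioi 0)) (nhds 0) :=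
  tendsto_exp_atBot.comp <| (tendsto_inv_nhdsGT_zero.const_mul_atTop_of_neg ha).congr
    fun x => (div_eq_mul_inv a x).symm

section Gibbs

variable {α : Type*} [MeasurableSpace α] {μ : Measure α} {U S T : Set α} {g : α → ℝ}
  {lam c A ε : ℝ}

/-- The Gibbs density `Γ_λ` of the potential `g` on `U`. -/
noncomputable def gibbsDensity (μ : Measure α) (U : Set α) (g : α → ℝ) (lam : ℝ) (u : α) : ℝ :=
  exp (g u / lam) / ∫ v in U, exp (g v / lam) ∂μ

theorem gibbsDensity_nonneg (u : α) : 0 ≤ gibbsDensity μ U g lam u :=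
  div_nonneg (exp_pos _).le (integral_nonneg fun _ => (exp_pos _).le)

theorem setIntegral_gibbsDensity (S : Set α) :
    ∫ u in S, gibbsDensity μ U g lam u ∂μ
      = (∫ u in S, exp (g u / lam) ∂μ) / ∫ v in U, exp (g v / lam) ∂μ :=
  integral_div _ _

theorem setIntegral_exp_div_le (hμS : μ S < ⊤) (hlam : 0 ≤ lam) (hg : ∀ u ∈ S, g u ≤ c) :
    ∫ u in S, exp (g u / lam) ∂μ ≤ exp (c / lam) * μ.real S := by
  refine (le_norm_self _).trans (norm_setIntegral_le_of_norm_le_const hμS fun u hu => ?_)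
  rw [Real.norm_of_nonneg (exp_pos _).le]
  exact exp_le_exp.2 (div_le_div_of_nonneg_right (hg u hu) hlam)

theorem exp_div_mul_le_setIntegral (hT : MeasurableSet T) (hμT : μ T ≠ ⊤)
    (hint : IntegrableOn (fun u => exp (g u / lam)) T μ) (hlam : 0 ≤ lam)
    (hg : ∀ u ∈ T, c ≤ g u) :
    exp (c / lam) * μ.real T ≤ ∫ u in T, exp (g u / lam) ∂μ :=
  setIntegral_ge_of_const_le_real hT hμT
    (fun u hu => exp_le_exp.2 (div_le_div_of_nonneg_right (hg u hu) hlam)) hint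

theorem setIntegral_gibbsDensity_le (hU : MeasurableSet U) (hμU : μ U ≠ ⊤) (hgm : Measurable g)
    (hSU : S ⊆ U) (hint : IntegrableOn (fun u => exp (g u / lam)) U μ) (hlam : 0 < lam)
    (hSg : ∀ u ∈ S, g u ≤ A - ε) (hL : 0 < μ.real {u ∈ U | A - ε / 2 ≤ g u}) :
    ∫ u in S, gibbsDensity μ U g lam u ∂μ
      ≤ μ.real S / μ.real {u ∈ U | A - ε / 2 ≤ g u} * exp (-ε / (2 * lam)) := by
  set T := {u ∈ U | A - ε / 2 ≤ g u}
  have hTU : T ⊆ U := fun _ hu => hu.1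
  have hT : MeasurableSet T := hU.inter (measurableSet_le measurable_const hgm)
  have hnum : ∫ u in S, exp (g u / lam) ∂μ ≤ exp ((A - ε) / lam) * μ.real S :=
    setIntegral_exp_div_le ((measure_mono hSU).trans_lt hμU.lt_top) hlam.le hSg
  have hden : exp ((A - ε / 2) / lam) * μ.real T ≤ ∫ u in U, exp (g u / lam) ∂μ :=
    (exp_div_mul_le_setIntegral hT (measure_ne_top_of_subset hTU hμU) (hint.mono_set hTU)
        hlam.le fun _ hu => hu.2).trans
      (setIntegral_mono_set hint (ae_of_all _ fun _ => (exp_pos _).le) hTU.eventuallyLE)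
  have hexp : exp ((A - ε) / lam) = exp (-ε / (2 * lam)) * exp ((A - ε / 2) / lam) := by
    rw [← exp_add]
    congr 1
    field_simp
    ring
  rw [setIntegral_gibbsDensity]
  calc (∫ u in S, exp (g u / lam) ∂μ) / ∫ u in U, exp (g u / lam) ∂μ
      ≤ exp ((A - ε) / lam) * μ.real S / (exp ((A - ε / 2) / lam) * μ.real T) :=
        div_le_div₀ (by positivity) hnum (by positivity) hden
    _ = μ.real S / μ.real T * exp (-ε / (2 * lam)) := by
        rw [hexp]
        field_simp

theorem tendsto_setIntegral_gibbsDensity_nhdsGT_zero {C : ℝ} (hε : 0 < ε)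
    (hbound : ∀ lam, 0 < lam → ∫ u in S, gibbsDensity μ U g lam u ∂μ ≤ C * exp (-ε / (2 * lam))) :
    Tendsto (fun lam => ∫ u in S, gibbsDensity μ U g lam u ∂μ)
      (nhdsWithin 0 (Set.Ioi 0)) (nhds 0) := by
  have hC : Tendsto (fun lam : ℝ => C * exp (-ε / (2 * lam)))
      (nhdsWithin 0 (Set.Ioi 0)) (nhds 0) := by
    simpa only [div_mul_eq_div_div, mul_zero] using
      (tendsto_exp_div_nhdsGT_zero_of_neg (by linarith : -ε / 2 < 0)).const_mul C
  refine tendsto_of_tendsto_of_tendsto_of_le_of_le' tendsto_const_nhds hC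
    (Eventually.of_forall fun _ => integral_nonneg fun _ => gibbsDensity_nonneg _) ?_
  filter_upwards [self_mem_nhdsWithin] with lam hlam using hbound lam hlam

end Gibbs

theorem gibbs_concentration_bound_general
    (ℓ d : ℕ) (U S : Set (EuclideanSpace ℝ (Fin ℓ)))
    (hUc : IsCompact U)
    (hSU : S ⊆ U)
    (f : EuclideanSpace ℝ (Fin ℓ) → ℝ) (hf : Continuous f)
    (p : EuclideanSpace ℝ (Fin ℓ) → EuclideanSpace ℝ (Fin d)) (hp : Continuous p)
    (yinf : EuclideanSpace ℝ (Fin d)) (A ε : ℝ) (hε : 0 < ε)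
    (hS : ∀ u ∈ S, f u + ∑ j, p u j * yinf j ≤ A - ε)
    (hL : 0 < (volume {u ∈ U | A - ε / 2 ≤ f u + ∑ j, p u j * yinf j}).toReal) :
    (∀ lam : ℝ, 0 < lam →
      (∫ u in S, Real.exp ((f u + ∑ j, p u j * yinf j) / lam)
          / ∫ v in U, Real.exp ((f v + ∑ j, p v j * yinf j) / lam))
        ≤ ((volume S).toReal
            / (volume {u ∈ U | A - ε / 2 ≤ f u + ∑ j, p u j * yinf j}).toReal)
          * Real.exp (-ε / (2 * lam))) ∧
    Tendsto (fun lam : ℝ =>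
        ∫ u in S, Real.exp ((f u + ∑ j, p u j * yinf j) / lam)
          / ∫ v in U, Real.exp ((f v + ∑ j, p v j * yinf j) / lam))
      (nhdsWithin 0 (Set.Ioi 0)) (nhds 0) := by
  set g : EuclideanSpace ℝ (Fin ℓ) → ℝ := fun u => f u + ∑ j, p u j * yinf j
  have hg : Continuous g := hf.add (continuous_finsetSum _ fun j _ => by fun_prop)
  have hbound : ∀ lam : ℝ, 0 < lam → ∫ u in S, gibbsDensity volume U g lam u
      ≤ volume.real S / volume.real {u ∈ U | A - ε / 2 ≤ g u} * exp (-ε / (2 * lam)) :=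
    fun lam hlam => setIntegral_gibbsDensity_le hUc.isClosed.measurableSet
      hUc.measure_lt_top.ne hg.measurable hSU
      ((hg.div_const lam).rexp.continuousOn.integrableOn_compact hUc) hlam hS hL
  exact ⟨hbound, tendsto_setIntegral_gibbsDensity_nhdsGT_zero hε hbound⟩

/-- Laplace-type concentration of the Gibbs density. If `A` bounds
`f + p·y^∞` on `U`, `S ⊆ U` is closed with `f + p·y^∞ ≤ A - ε` on `S`, and
`L = Leb{u ∈ U : f(u)+p(u)·y^∞ ≥ A - ε/2} > 0`, then for every `λ > 0`,
`∫_S Γ_λ(y^∞) ≤ (Leb(S)/L) e^{-ε/(2λ)}`, and hence `∫_S Γ_λ(y^∞) → 0` as `λ ↓ 0`. -/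
theorem gibbs_concentration_bound
    (ℓ d : ℕ) (U S : Set (EuclideanSpace ℝ (Fin ℓ)))
    (hUmeas : MeasurableSet U) (hUc : IsCompact U) (hUpos : 0 < volume U)
    (hSU : S ⊆ U) (hScl : IsClosed S)
    (f : EuclideanSpace ℝ (Fin ℓ) → ℝ) (hf : Continuous f)
    (p : EuclideanSpace ℝ (Fin ℓ) → EuclideanSpace ℝ (Fin d)) (hp : Continuous p)
    (yinf : EuclideanSpace ℝ (Fin d)) (A ε : ℝ) (hε : 0 < ε)
    (hA : ∀ u ∈ U, f u + ∑ j, p u j * yinf j ≤ A)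
    (hS : ∀ u ∈ S, f u + ∑ j, p u j * yinf j ≤ A - ε)
    (hL : 0 < (volume {u ∈ U | A - ε / 2 ≤ f u + ∑ j, p u j * yinf j}).toReal) :
    (∀ lam : ℝ, 0 < lam →
      (∫ u in S, Real.exp ((f u + ∑ j, p u j * yinf j) / lam)
          / ∫ v in U, Real.exp ((f v + ∑ j, p v j * yinf j) / lam))
        ≤ ((volume S).toReal
            / (volume {u ∈ U | A - ε / 2 ≤ f u + ∑ j, p u j * yinf j}).toReal)
          * Real.exp (-ε / (2 * lam))) ∧
    Tendsto (fun lam : ℝ =>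
        ∫ u in S, Real.exp ((f u + ∑ j, p u j * yinf j) / lam)
          / ∫ v in U, Real.exp ((f v + ∑ j, p v j * yinf j) / lam))
      (nhdsWithin 0 (Set.Ioi 0)) (nhds 0) :=
  gibbs_concentration_bound_general ℓ d U S hUc hSU f hf p hp yinf A ε hε hS hL
end

section
/- Suppose the transition probabilities are chosen directly, p^u_i = u with U a convex subset of the probability simplex in ℝ^d, and f(t,i,u) = δ(t)g(i,u) with g(i,·) concave. If π is a relaxed equilibrium for the discrete-time MDP, then the barycenter policy α^π(i) := ∫_U u (π(i))(du) ∈ U satisfies f^{π(i)}(t,i) = f^{α^π(i)}(t,i) for all t and i; in particular, J^{α^π} = J^π and α^π is a standard equilibrium. -/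
/-!
With direct transitions the transition matrix of a relaxed control depends only on its
barycenters, so replacing each `π(i)` by the Dirac mass at `α^π(i)` leaves the transition
matrix, and hence the continuation value `V^π`, unchanged. Testing the equilibrium condition
against this deviation at time `0` therefore gives `g(i, α^π(i)) ≤ ∫ g(i, u) π(i)(du)`, and
Jensen's inequality for the concave `g(i, ·)` gives the reverse. So both controls have the same
rewards and transitions, hence the same `J` and `V`, and the equilibrium property transfers.
-/

open MeasureTheory Real

noncomputable section

variable (ℓ d : ℕ) (U : Set (EuclideanSpace ℝ (Fin ℓ)))
  (f : ℕ → Fin d → EuclideanSpace ℝ (Fin ℓ) → ℝ)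
  (p : EuclideanSpace ℝ (Fin ℓ) → Fin d → Fin d → ℝ)

/-- Transition matrix induced by a relaxed (measure-valued) feedback control `pol`. -/
def PmatM (pol : Fin d → Measure (EuclideanSpace ℝ (Fin ℓ))) : Matrix (Fin d) (Fin d) ℝ :=
  Matrix.of fun i j => ∫ u, p u i j ∂(pol i)

/-- Running reward at "time-difference" `k` under `pol`. -/
def rvecM (pol : Fin d → Measure (EuclideanSpace ℝ (Fin ℓ))) (k : ℕ) : Fin d → ℝ :=
  fun i => ∫ u, f k i u ∂(pol i)

/-- The value `J^pol(i) = E_i[Σ_k f^{pol(X_k)}(k, X_k)]`. -/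
def JM (pol : Fin d → Measure (EuclideanSpace ℝ (Fin ℓ))) : Fin d → ℝ :=
  ∑' k : ℕ, ((PmatM ℓ d p pol) ^ k).mulVec (rvecM ℓ d f pol k)

/-- The auxiliary continuation value `V^pol`. -/
def VM (pol : Fin d → Measure (EuclideanSpace ℝ (Fin ℓ))) : Fin d → ℝ :=
  ∑' k : ℕ, ((PmatM ℓ d p pol) ^ k).mulVec (rvecM ℓ d f pol (k + 1))

/-- The value `J^{pol'⊗₁pol}` of the concatenation of `pol'` (time 0) and `pol` (time ≥ 1). -/
def JcatM (pol' pol : Fin d → Measure (EuclideanSpace ℝ (Fin ℓ))) : Fin d → ℝ :=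
  fun i => rvecM ℓ d f pol' 0 i + (PmatM ℓ d p pol').mulVec (VM ℓ d f p pol) i

/-- `pol` is a relaxed feedback control: each `pol i` is a probability measure on `U`. -/
def IsRelaxedControl (pol : Fin d → Measure (EuclideanSpace ℝ (Fin ℓ))) : Prop :=
  ∀ i, IsProbabilityMeasure (pol i) ∧ pol i Uᶜ = 0

/-- `pol` is a relaxed equilibrium for the (unregularized) discrete-time MDP. -/
def IsRelaxedEquilibriumM (pol : Fin d → Measure (EuclideanSpace ℝ (Fin ℓ))) : Prop :=
  IsRelaxedControl ℓ d U pol ∧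
  ∀ pol', IsRelaxedControl ℓ d U pol' →
    ∀ i, JcatM ℓ d f p pol' pol i ≤ JM ℓ d f p pol i

/-- The barycenter `α^pol(i) = ∫_U u (pol i)(du)` of a relaxed control. -/
def bary (d : ℕ) (pol : Fin d → Measure (EuclideanSpace ℝ (Fin d))) (i : Fin d) :
    EuclideanSpace ℝ (Fin d) :=
  WithLp.toLp 2 (fun j => ∫ u, u j ∂(pol i))

open Matrix

namespace Matrix

variable {n : Type*} [Fintype n] [DecidableEq n]

lemma norm_mulVec_le_of_mem_rowStochastic {M : Matrix n n ℝ} (hM : M ∈ rowStochastic ℝ n)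
    (v : n → ℝ) : ‖M *ᵥ v‖ ≤ ‖v‖ := by
  refine (pi_norm_le_iff_of_nonneg (norm_nonneg v)).2 fun i => ?_
  calc ‖(M *ᵥ v) i‖ = |∑ j, M i j * v j| := rfl
    _ ≤ ∑ j, |M i j * v j| := Finset.abs_sum_le_sum_abs _ _
    _ ≤ ∑ j, M i j * ‖v‖ := Finset.sum_le_sum fun j _ => by
        rw [abs_mul, abs_of_nonneg (nonneg_of_mem_rowStochastic hM)]
        exact mul_le_mul_of_nonneg_left (norm_le_pi_norm v j)
          (nonneg_of_mem_rowStochastic hM)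
    _ = ‖v‖ := by rw [← Finset.sum_mul, sum_row_of_mem_rowStochastic hM, one_mul]

lemma summable_smul_pow_mulVec_of_mem_rowStochastic {P : Matrix n n ℝ}
    (hP : P ∈ rowStochastic ℝ n) {c : ℕ → ℝ} (hc : Summable c) (v : n → ℝ) :
    Summable fun k => c k • (P ^ k *ᵥ v) :=
  .of_norm_bounded (hc.abs.mul_right ‖v‖) fun k => by
    rw [norm_smul, Real.norm_eq_abs]
    exact mul_le_mul_of_nonneg_left
      (norm_mulVec_le_of_mem_rowStochastic (pow_mem hP k) v) (abs_nonneg _)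

lemma tsum_pow_mulVec_eq_add_mulVec_tsum {P : Matrix n n ℝ} {v : ℕ → n → ℝ}
    (h : Summable fun k => P ^ k *ᵥ v (k + 1)) :
    ∑' k, P ^ k *ᵥ v k = v 0 + P *ᵥ ∑' k, P ^ k *ᵥ v (k + 1) := by
  let L := LinearMap.toContinuousLinearMap (mulVecLin P)
  have hshift : ∀ k, P ^ (k + 1) *ᵥ v (k + 1) = L (P ^ k *ᵥ v (k + 1)) := fun k => by
    rw [pow_succ', ← mulVec_mulVec]; rfl
  rw [tsum_eq_zero_add' (by simpa only [hshift] using h.mapL L), pow_zero, one_mulVec,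
    funext hshift, ← L.map_tsum h]
  rfl

end Matrix

section RelaxedControl

variable {ℓ d U f p}

lemma IsRelaxedControl.ae_mem {pol : Fin d → Measure (EuclideanSpace ℝ (Fin ℓ))}
    (h : IsRelaxedControl ℓ d U pol) (i : Fin d) : ∀ᵐ u ∂pol i, u ∈ U :=
  measure_eq_zero_iff_ae_notMem.1 (h i).2 |>.mono fun _ hu => not_not.1 hu

lemma isRelaxedControl_dirac {a : Fin d → EuclideanSpace ℝ (Fin ℓ)} (ha : ∀ i, a i ∈ U) :
    IsRelaxedControl ℓ d U fun i => Measure.dirac (a i) := fun i =>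
  ⟨inferInstance, by simp [Measure.dirac_apply, ha i]⟩

lemma PmatM_dirac (a : Fin d → EuclideanSpace ℝ (Fin ℓ)) :
    PmatM ℓ d p (fun i => Measure.dirac (a i)) = of fun i j => p (a i) i j := by
  ext i j
  exact integral_dirac _ _

lemma rvecM_dirac (a : Fin d → EuclideanSpace ℝ (Fin ℓ)) (k : ℕ) :
    rvecM ℓ d f (fun i => Measure.dirac (a i)) k = fun i => f k i (a i) := by
  funext i
  exact integral_dirac _ _

lemma rvecM_mul_left (c : ℕ → ℝ) (g : Fin d → EuclideanSpace ℝ (Fin ℓ) → ℝ)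
    (pol : Fin d → Measure (EuclideanSpace ℝ (Fin ℓ))) (k : ℕ) :
    rvecM ℓ d (fun t i u => c t * g i u) pol k = c k • fun i => ∫ u, g i u ∂pol i := by
  funext i
  exact integral_const_mul _ _

variable {pol σ : Fin d → Measure (EuclideanSpace ℝ (Fin ℓ))}

lemma JM_eq_JcatM_self
    (h : Summable fun k => PmatM ℓ d p pol ^ k *ᵥ rvecM ℓ d f pol (k + 1)) :
    JM ℓ d f p pol = JcatM ℓ d f p pol pol := by
  rw [JM, tsum_pow_mulVec_eq_add_mulVec_tsum h]
  rfl

lemma JM_congr (hP : PmatM ℓ d p σ = PmatM ℓ d p pol) (hr : rvecM ℓ d f σ = rvecM ℓ d f pol) :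
    JM ℓ d f p σ = JM ℓ d f p pol := by
  rw [JM, JM, hP, hr]

lemma VM_congr (hP : PmatM ℓ d p σ = PmatM ℓ d p pol) (hr : rvecM ℓ d f σ = rvecM ℓ d f pol) :
    VM ℓ d f p σ = VM ℓ d f p pol := by
  rw [VM, VM, hP, hr]

lemma IsRelaxedEquilibriumM.rvecM_zero_le (hpol : IsRelaxedEquilibriumM ℓ d U f p pol)
    (hσ : IsRelaxedControl ℓ d U σ) (hP : PmatM ℓ d p σ = PmatM ℓ d p pol)
    (h : Summable fun k => PmatM ℓ d p pol ^ k *ᵥ rvecM ℓ d f pol (k + 1)) (i : Fin d) :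
    rvecM ℓ d f σ 0 i ≤ rvecM ℓ d f pol 0 i := by
  have hdev := hpol.2 σ hσ i
  rw [JM_eq_JcatM_self h, JcatM, JcatM, hP] at hdev
  linarith

lemma IsRelaxedEquilibriumM.of_PmatM_eq_of_rvecM_eq (hpol : IsRelaxedEquilibriumM ℓ d U f p pol)
    (hσ : IsRelaxedControl ℓ d U σ) (hP : PmatM ℓ d p σ = PmatM ℓ d p pol)
    (hr : rvecM ℓ d f σ = rvecM ℓ d f pol) : IsRelaxedEquilibriumM ℓ d U f p σ := by
  refine ⟨hσ, fun pol' hpol' i => ?_⟩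
  rw [JM_congr hP hr, JcatM, VM_congr hP hr]
  exact hpol.2 pol' hpol' i

end RelaxedControl

section Compact

variable {E : Type*} [MeasurableSpace E] {μ : Measure E} {K : Set E}

lemma integrable_of_ae_mem_of_isCompact [TopologicalSpace E] [T2Space E] [OpensMeasurableSpace E]
    {F : Type*} [NormedAddCommGroup F] [IsFiniteMeasure μ]
    (hK : IsCompact K) (hμK : ∀ᵐ x ∂μ, x ∈ K) {φ : E → F} (hφ : ContinuousOn φ K) :
    Integrable φ μ := by
  simpa only [IntegrableOn, Measure.restrict_eq_self_of_ae_mem hμK] using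
    hφ.integrableOn_compact (μ := μ) hK

variable [NormedAddCommGroup E] [NormedSpace ℝ E] [CompleteSpace E] [OpensMeasurableSpace E]
  [IsProbabilityMeasure μ]

lemma Convex.integral_id_mem_of_isCompact (hKc : Convex ℝ K) (hK : IsCompact K)
    (hμK : ∀ᵐ x ∂μ, x ∈ K) : ∫ x, x ∂μ ∈ K :=
  hKc.integral_mem hK.isClosed hμK (integrable_of_ae_mem_of_isCompact hK hμK continuousOn_id)

lemma ConcaveOn.integral_le_map_integral_id_of_isCompact {g : E → ℝ} (hg : ConcaveOn ℝ K g)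
    (hgc : ContinuousOn g K) (hK : IsCompact K) (hμK : ∀ᵐ x ∂μ, x ∈ K) :
    ∫ x, g x ∂μ ≤ g (∫ x, x ∂μ) :=
  hg.le_map_integral hgc hK.isClosed hμK
    (integrable_of_ae_mem_of_isCompact hK hμK continuousOn_id)
    (integrable_of_ae_mem_of_isCompact hK hμK hgc)

end Compact

section DirectTransitions

variable {d}

lemma bary_eq_integral {pol : Fin d → Measure (EuclideanSpace ℝ (Fin d))} {i : Fin d}
    (h : Integrable (fun u => u) (pol i)) : bary d pol i = ∫ u, u ∂pol i := by
  ext j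
  exact (EuclideanSpace.proj (𝕜 := ℝ) j).integral_comp_comm h

lemma PmatM_dirac_bary (pol : Fin d → Measure (EuclideanSpace ℝ (Fin d))) :
    PmatM d d (fun u _ j => u j) (fun i => Measure.dirac (bary d pol i)) =
      PmatM d d (fun u _ j => u j) pol := by
  rw [PmatM_dirac]
  rfl

lemma PmatM_mem_rowStochastic_of_bary_mem {pol : Fin d → Measure (EuclideanSpace ℝ (Fin d))}
    (h : ∀ i, (∀ j, 0 ≤ bary d pol i j) ∧ ∑ j, bary d pol i j = 1) :
    PmatM d d (fun u _ j => u j) pol ∈ rowStochastic ℝ (Fin d) :=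
  mem_rowStochastic_iff_sum.2 ⟨fun i j => (h i).1 j, fun i => (h i).2⟩

end DirectTransitions

theorem barycenter_of_relaxed_equilibrium_is_standard_general
    (d : ℕ) (U : Set (EuclideanSpace ℝ (Fin d)))
    (hUsub : U ⊆ {y : EuclideanSpace ℝ (Fin d) | (∀ j, 0 ≤ y j) ∧ (∑ j, y j) = 1})
    (hUconv : Convex ℝ U) (hUc : IsCompact U)
    (g : Fin d → EuclideanSpace ℝ (Fin d) → ℝ)
    (hgcont : ∀ i, Continuous (g i)) (hgconc : ∀ i, ConcaveOn ℝ U (g i))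
    (dis : ℕ → ℝ) (hdis0 : dis 0 = 1)
    (hdissum : Summable dis)
    (pol : Fin d → Measure (EuclideanSpace ℝ (Fin d)))
    (hpol : IsRelaxedEquilibriumM d d U (fun t i u => dis t * g i u) (fun u _ j => u j) pol) :
    (∀ i, bary d pol i ∈ U) ∧
    (∀ t i, (∫ u, dis t * g i u ∂(pol i)) = dis t * g i (bary d pol i)) ∧
    JM d d (fun t i u => dis t * g i u) (fun u _ j => u j)
        (fun i => Measure.dirac (bary d pol i))
      = JM d d (fun t i u => dis t * g i u) (fun u _ j => u j) pol ∧
    IsRelaxedEquilibriumM d d U (fun t i u => dis t * g i u) (fun u _ j => u j)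
      (fun i => Measure.dirac (bary d pol i)) := by
  have hprob i := (hpol.1 i).1
  have hbary i : bary d pol i = ∫ u, u ∂pol i :=
    bary_eq_integral (integrable_of_ae_mem_of_isCompact hUc (hpol.1.ae_mem i) continuousOn_id)
  have hbaryU i : bary d pol i ∈ U :=
    hbary i ▸ hUconv.integral_id_mem_of_isCompact hUc (hpol.1.ae_mem i)
  have hjensen i : ∫ u, g i u ∂pol i ≤ g i (bary d pol i) :=
    hbary i ▸ (hgconc i).integral_le_map_integral_id_of_isCompact (hgcont i).continuousOn hUc
      (hpol.1.ae_mem i)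
  have hσ := isRelaxedControl_dirac hbaryU
  have hsum : Summable fun k => PmatM d d (fun u _ j => u j) pol ^ k *ᵥ
      rvecM d d (fun t i u => dis t * g i u) pol (k + 1) := by
    simp_rw [rvecM_mul_left, mulVec_smul]
    exact summable_smul_pow_mulVec_of_mem_rowStochastic
      (PmatM_mem_rowStochastic_of_bary_mem fun i => hUsub (hbaryU i))
      ((summable_nat_add_iff 1).2 hdissum) _
  have hreverse i : g i (bary d pol i) ≤ ∫ u, g i u ∂pol i := by
    simpa [rvecM_dirac, rvecM_mul_left, hdis0] using
      hpol.rvecM_zero_le hσ (PmatM_dirac_bary pol) hsum i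
  have hg i : ∫ u, g i u ∂pol i = g i (bary d pol i) := (hjensen i).antisymm (hreverse i)
  have hr : rvecM d d (fun t i u => dis t * g i u) (fun i => Measure.dirac (bary d pol i)) =
      rvecM d d (fun t i u => dis t * g i u) pol := by
    funext k i
    simp [rvecM_dirac, rvecM_mul_left, hg]
  refine ⟨hbaryU, fun t i => by rw [integral_const_mul, hg], JM_congr (PmatM_dirac_bary pol) hr,
    hpol.of_PmatM_eq_of_rvecM_eq hσ (PmatM_dirac_bary pol) hr⟩

/-- when transition probabilities are chosen directly (`p^u_i = u`, `U` a
convex subset of the probability simplex) and `f(t,i,u) = δ(t) g(i,u)` with `g(i,·)`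
concave, the barycenter `α^pol` of any relaxed equilibrium `pol` is a standard
equilibrium with the same reward and the same value `J`. -/
theorem barycenter_of_relaxed_equilibrium_is_standard
    (d : ℕ) (U : Set (EuclideanSpace ℝ (Fin d)))
    (hUsub : U ⊆ {y : EuclideanSpace ℝ (Fin d) | (∀ j, 0 ≤ y j) ∧ (∑ j, y j) = 1})
    (hUconv : Convex ℝ U) (hUc : IsCompact U) (hUne : U.Nonempty)
    (g : Fin d → EuclideanSpace ℝ (Fin d) → ℝ)
    (hgcont : ∀ i, Continuous (g i)) (hgconc : ∀ i, ConcaveOn ℝ U (g i))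
    (dis : ℕ → ℝ) (hdis0 : dis 0 = 1) (hdis : ∀ t, dis t ∈ Set.Icc (0:ℝ) 1)
    (hdisanti : Antitone dis) (hdissum : Summable dis)
    (pol : Fin d → Measure (EuclideanSpace ℝ (Fin d)))
    (hpol : IsRelaxedEquilibriumM d d U (fun t i u => dis t * g i u) (fun u _ j => u j) pol) :
    (∀ i, bary d pol i ∈ U) ∧
    (∀ t i, (∫ u, dis t * g i u ∂(pol i)) = dis t * g i (bary d pol i)) ∧
    JM d d (fun t i u => dis t * g i u) (fun u _ j => u j)
        (fun i => Measure.dirac (bary d pol i))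
      = JM d d (fun t i u => dis t * g i u) (fun u _ j => u j) pol ∧
    IsRelaxedEquilibriumM d d U (fun t i u => dis t * g i u) (fun u _ j => u j)
      (fun i => Measure.dirac (bary d pol i)) :=
  barycenter_of_relaxed_equilibrium_is_standard_general d U hUsub hUconv hUc g hgcont hgconc dis
    hdis0 hdissum pol hpol

end
end
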